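/- arXiv:1504.03437 — 5 statements merged into one kernel-verified Lean document; each statement's English description precedes it below -/
import Mathlib

section
/- Let W = 2m with sorted halves as in Proposition 2 and half-medians w m₀, w m₁. If w m₀ > w m₁, then the median (the element of rank W/2) of the full multiset lies in {w m₁, ..., w (W-1)} ∪ {w 0, ..., w m₀}; and if w m₀ = w m₁ then the median equals w m₀. -/
/-!
Write `med` for the element of rank `m` of the sorted multiset and suppose `w m₁ ≤ w m₀`. The
indices `0, …, m₀` and `m, …, m₁` carry `m + 1` values `≤ w m₀`, so `med ≤ w m₀`; the indices
`m₀, …, m - 1` and `m₁, …, W - 1` carry `m` values `≥ w m₁`, so `w m₁ ≤ med`. A value in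
`[w m₁, w m₀]` taken strictly between `m₀` and `m` (resp. between `m` and `m₁`) is squeezed by
the sortedness of its half to `w m₀` (resp. `w m₁`).
-/

open Finset

namespace List

lemma countP_le_of_forall_mem_drop {α : Type*} {p : α → Bool} {L : List α} {n : ℕ}
    (h : ∀ x ∈ L.drop n, ¬ p x) : L.countP p ≤ n := by
  rw [← take_append_drop n L, countP_append, countP_eq_zero.2 h, add_zero]
  exact countP_le_length.trans (length_take_le _ _)

lemma countP_le_of_forall_mem_take {α : Type*} {p : α → Bool} {L : List α} {n : ℕ}
    (h : ∀ x ∈ L.take n, ¬ p x) : L.countP p ≤ L.length - n := by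
  rw [← take_append_drop n L, countP_append, countP_eq_zero.2 h, zero_add, length_append,
    length_drop, length_take]
  exact countP_le_length.trans (by rw [length_drop]; omega)

section Preorder

variable {α : Type*} [Preorder α] {L : List α} {n : ℕ}

lemma SortedLE.getElem_le_of_mem_drop (hL : L.SortedLE) (hn : n < L.length) {x : α}
    (hx : x ∈ L.drop n) : L[n] ≤ x := by
  obtain ⟨i, hi, rfl⟩ := mem_iff_getElem.1 hx
  rw [getElem_drop]
  exact hL.getElem_le_getElem_of_le (Nat.le_add_right n i)

lemma SortedLE.le_getElem_of_mem_take (hL : L.SortedLE) (hn : n < L.length) {x : α}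
    (hx : x ∈ L.take (n + 1)) : x ≤ L[n] := by
  obtain ⟨i, hi, rfl⟩ := mem_iff_getElem.1 hx
  rw [getElem_take]
  exact hL.getElem_le_getElem_of_le (by simp at hi; omega)

end Preorder

section LinearOrder

variable {α : Type*} [LinearOrder α] {L : List α} {n : ℕ}

lemma SortedLE.getElem_le_of_lt_countP (hL : L.SortedLE) (hn : n < L.length) {v : α}
    (h : n < L.countP (· ≤ v)) : L[n] ≤ v := by
  by_contra! hv
  refine h.not_ge (countP_le_of_forall_mem_drop fun x hx => ?_)
  simpa using hv.trans_le (hL.getElem_le_of_mem_drop hn hx)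

lemma SortedLE.le_getElem_of_length_le (hL : L.SortedLE) (hn : n < L.length) {v : α}
    (h : L.length ≤ n + L.countP (v ≤ ·)) : v ≤ L[n] := by
  by_contra! hv
  have := countP_le_of_forall_mem_take (p := (v ≤ ·)) fun x hx => by
    simpa using (hL.le_getElem_of_mem_take hn hx).trans_lt hv
  omega

end LinearOrder

end List

lemma Multiset.countP_sort_map_univ {α ι : Type*} [LinearOrder α] [Fintype ι] (w : ι → α)
    (p : α → Prop) [DecidablePred p] :
    ((univ.val.map w).sort (· ≤ ·)).countP (fun x => decide (p x)) = #{i | p (w i)} := by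
  rw [← Multiset.coe_countP, Multiset.sort_eq, Multiset.countP_map]
  rfl

structure SortedHalves {W : ℕ} (m : ℕ) (w : Fin W → ℝ) : Prop where
  le_lower : ∀ i j : Fin W, (i : ℕ) ≤ j → (j : ℕ) < m → w i ≤ w j
  le_upper : ∀ i j : Fin W, m ≤ (i : ℕ) → (i : ℕ) ≤ j → w i ≤ w j

namespace SortedHalves

variable {m W : ℕ} {w : Fin W → ℝ} {m₀ m₁ : Fin W}

lemma le_card_filter_le (hw : SortedHalves m w) (hW : W = 2 * m) (hm₀ : (m₀ : ℕ) = m / 2)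
    (hm₁ : (m₁ : ℕ) = m + m / 2) {v : ℝ} (h₀ : w m₀ ≤ v) (h₁ : w m₁ ≤ v) :
    m + 1 ≤ #{i | w i ≤ v} := by
  let mid : Fin W := ⟨m, by omega⟩
  have hsub : Iic m₀ ∪ Icc mid m₁ ⊆ ({i | w i ≤ v} : Finset (Fin W)) := by
    intro i hi
    simp only [mem_union, mem_Iic, mem_Icc, Fin.le_def] at hi
    simp only [mem_filter, mem_univ, true_and]
    rcases hi with hi | ⟨hi₁, hi₂⟩
    · exact (hw.le_lower i m₀ hi (by omega)).trans h₀
    · exact (hw.le_upper i m₁ hi₁ hi₂).trans h₁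
  have hdisj : Disjoint (Iic m₀) (Icc mid m₁) := by
    simp only [disjoint_left, mem_Iic, mem_Icc, Fin.le_def]
    intro i hi hi'
    simp only [mid] at hi'
    omega
  have hcard := card_le_card hsub
  rw [card_union_of_disjoint hdisj, Fin.card_Iic, Fin.card_Icc] at hcard
  simp only [hm₀, hm₁, mid] at hcard
  omega

lemma le_card_filter_ge (hw : SortedHalves m w) (hW : W = 2 * m) (hm₀ : (m₀ : ℕ) = m / 2)
    (hm₁ : (m₁ : ℕ) = m + m / 2) {v : ℝ} (h₀ : v ≤ w m₀) (h₁ : v ≤ w m₁) :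
    m ≤ #{i | v ≤ w i} := by
  let last₀ : Fin W := ⟨m - 1, by omega⟩
  have hsub : Icc m₀ last₀ ∪ Ici m₁ ⊆ ({i | v ≤ w i} : Finset (Fin W)) := by
    intro i hi
    simp only [mem_union, mem_Icc, mem_Ici, Fin.le_def] at hi
    simp only [mem_filter, mem_univ, true_and]
    rcases hi with ⟨hi₁, hi₂⟩ | hi
    · exact h₀.trans (hw.le_lower m₀ i hi₁ (by simp only [last₀] at hi₂; omega))
    · exact h₁.trans (hw.le_upper m₁ i (by omega) hi)
  have hdisj : Disjoint (Icc m₀ last₀) (Ici m₁) := by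
    simp only [disjoint_left, mem_Icc, mem_Ici, Fin.le_def]
    intro i hi hi'
    simp only [last₀] at hi
    omega
  have hcard := card_le_card hsub
  rw [card_union_of_disjoint hdisj, Fin.card_Icc, Fin.card_Ici] at hcard
  simp only [hm₀, hm₁, last₀] at hcard
  omega

lemma median_mem_Icc (hw : SortedHalves m w) (hW : W = 2 * m) (hm₀ : (m₀ : ℕ) = m / 2)
    (hm₁ : (m₁ : ℕ) = m + m / 2) (h : w m₁ ≤ w m₀) :
    ((univ.val.map w).sort (· ≤ ·)).getD m 0 ∈ Set.Icc (w m₁) (w m₀) := by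
  set L := (univ.val.map w).sort (· ≤ ·)
  have hL : L.SortedLE := (Multiset.pairwise_sort _ _).sortedLE
  have hlen : L.length = W := by simp [L]
  have hmL : m < L.length := by omega
  rw [List.getD_eq_getElem _ _ hmL]
  constructor
  · refine hL.le_getElem_of_length_le hmL ?_
    have := hw.le_card_filter_ge hW hm₀ hm₁ h le_rfl
    rw [Multiset.countP_sort_map_univ w (w m₁ ≤ ·)]
    omega
  · refine hL.getElem_le_of_lt_countP hmL ?_
    have := hw.le_card_filter_le hW hm₀ hm₁ le_rfl h
    rw [Multiset.countP_sort_map_univ w (· ≤ w m₀)]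
    omega

lemma exists_eq_outside_half_medians (hw : SortedHalves m w) (i : Fin W) (h₁ : w m₁ ≤ w i)
    (h₀ : w i ≤ w m₀) :
    ∃ j : Fin W, (((m₁ : ℕ) ≤ j ∧ (j : ℕ) < W) ∨ (j : ℕ) ≤ m₀) ∧ w i = w j := by
  rcases lt_or_ge (i : ℕ) m with hi | hi
  · rcases le_or_gt (i : ℕ) m₀ with hi₀ | hi₀
    · exact ⟨i, Or.inr hi₀, rfl⟩
    · exact ⟨m₀, Or.inr le_rfl, h₀.antisymm (hw.le_lower m₀ i hi₀.le hi)⟩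
  · rcases le_or_gt (m₁ : ℕ) i with hi₁ | hi₁
    · exact ⟨i, Or.inl ⟨hi₁, i.isLt⟩, rfl⟩
    · exact ⟨m₁, Or.inl ⟨le_rfl, m₁.isLt⟩, (hw.le_upper i m₁ hi hi₁.le).antisymm h₁⟩

end SortedHalves

theorem median_localization_gt_eq_general
    (m : ℕ) (W : ℕ) (hW : W = 2 * m)
    (w : Fin W → ℝ)
    (hsorted₀ : ∀ i j : Fin W, (i : ℕ) ≤ j → (j : ℕ) < m → w i ≤ w j)
    (hsorted₁ : ∀ i j : Fin W, m ≤ (i : ℕ) → (i : ℕ) ≤ j → w i ≤ w j)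
    (m₀ m₁ : Fin W)
    (hm₀ : (m₀ : ℕ) = m / 2)
    (hm₁ : (m₁ : ℕ) = m + m / 2)
    (med : ℝ)
    (hmed : med = (Multiset.sort
        ((Finset.univ : Finset (Fin W)).val.map w) (· ≤ ·)).getD m 0) :
    (w m₁ < w m₀ →
      ∃ i : Fin W, (((m₁ : ℕ) ≤ i ∧ (i : ℕ) < W) ∨ ((i : ℕ) ≤ m₀)) ∧ med = w i) ∧
    (w m₀ = w m₁ → med = w m₀) := by
  have hw : SortedHalves m w := ⟨hsorted₀, hsorted₁⟩
  have hbounds (h : w m₁ ≤ w m₀) : med ∈ Set.Icc (w m₁) (w m₀) :=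
    hmed ▸ hw.median_mem_Icc hW hm₀ hm₁ h
  refine ⟨fun hlt => ?_, fun heq => ?_⟩
  · obtain ⟨h₁, h₀⟩ := hbounds hlt.le
    have hmL : m < ((univ.val.map w).sort (· ≤ ·)).length := by
      rw [Multiset.length_sort, Multiset.card_map, card_val, card_univ, Fintype.card_fin]
      omega
    have hmem : med ∈ (univ.val.map w).sort (· ≤ ·) :=
      hmed ▸ List.getD_eq_getElem _ _ hmL ▸ List.getElem_mem hmL
    obtain ⟨i, -, rfl⟩ := Multiset.mem_map.1 ((Multiset.mem_sort _).1 hmem)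
    exact hw.exists_eq_outside_half_medians i h₁ h₀
  · obtain ⟨h₁, h₀⟩ := hbounds heq.ge
    exact h₀.antisymm (heq ▸ h₁)

/-- Proposition 2, cases `w m₀ > w m₁` and `w m₀ = w m₁`: with two sorted
halves of length `m` and half-medians at indices `m₀ = m / 2` and
`m₁ = m + m / 2`, if `w m₀ > w m₁` then the median (the element of rank
`W / 2 = m` of the full multiset) lies in `{w m₁, …, w (W-1)} ∪ {w 0, …, w m₀}`,
and if `w m₀ = w m₁` then the median equals `w m₀`. -/
theorem median_localization_gt_eq
    (m : ℕ) (hm : 1 ≤ m) (W : ℕ) (hW : W = 2 * m)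
    (w : Fin W → ℝ)
    (hsorted₀ : ∀ i j : Fin W, (i : ℕ) ≤ j → (j : ℕ) < m → w i ≤ w j)
    (hsorted₁ : ∀ i j : Fin W, m ≤ (i : ℕ) → (i : ℕ) ≤ j → w i ≤ w j)
    (m₀ m₁ : Fin W)
    (hm₀ : (m₀ : ℕ) = m / 2)
    (hm₁ : (m₁ : ℕ) = m + m / 2)
    (med : ℝ)
    (hmed : med = (Multiset.sort
        ((Finset.univ : Finset (Fin W)).val.map w) (· ≤ ·)).getD m 0) :
    (w m₁ < w m₀ →
      ∃ i : Fin W, (((m₁ : ℕ) ≤ i ∧ (i : ℕ) < W) ∨ ((i : ℕ) ≤ m₀)) ∧ med = w i) ∧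
    (w m₀ = w m₁ → med = w m₀) :=
  median_localization_gt_eq_general m W hW w hsorted₀ hsorted₁ m₀ m₁ hm₀ hm₁ med hmed
end

section
/- Let L ≥ 2, pm : Fin L → ℝ strictly increasing, a : Fin L → ℝ nonnegative, and S the multiset of 2L extended metrics {pm l, pm l + a l}. Let A = {s ∈ S : s < pm (L/2)} (accepted by DTS.1, L even) and R = {s ∈ S : s > pm (L-1)} (rejected by DTS.2). Then 2L − |R| ≥ L, i.e., the number of non-rejected candidates is at least L, so DTS.3 can always complete the accepted set A to exactly L survivors using non-rejected candidates. -/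
/-- The number of non-rejected candidates (those not exceeding
`RT = pm (L-1)`) is at least `L`, so DTS.3 can always fill the list. -/
theorem dts_nonrejected_at_least_L
    (L : ℕ) (hL : 2 ≤ L) (hLeven : Even L)
    (pm a : Fin L → ℝ)
    (hpm : StrictMono pm)
    (ha : ∀ l, 0 ≤ a l)
    (S : Multiset ℝ)
    (hS : S = (Finset.univ : Finset (Fin L)).val.map pm +
              (Finset.univ : Finset (Fin L)).val.map (fun l => pm l + a l)) :
    L ≤ 2 * L - (S.filter (fun s => pm ⟨L - 1, by omega⟩ < s)).card := by
  subst hS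
  rw [Multiset.filter_add, Multiset.card_add]
  have h1 : ((Finset.univ : Finset (Fin L)).val.map pm).filter
      (fun s => pm ⟨L - 1, by omega⟩ < s) = 0 := by
    rw [Multiset.filter_map, Multiset.eq_zero_iff_forall_notMem]
    intro x hx
    simp only [Multiset.mem_map, Multiset.mem_filter] at hx
    obtain ⟨l, ⟨_, hl⟩, _⟩ := hx
    have : (l : Fin L) ≤ ⟨L - 1, by omega⟩ := by
      rw [Fin.le_def]
      simp only []
      omega
    exact absurd (hpm.monotone this) (not_le.mpr hl)
  rw [h1]
  have h2 : (((Finset.univ : Finset (Fin L)).val.map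
      (fun l => pm l + a l)).filter (fun s => pm ⟨L - 1, by omega⟩ < s)).card ≤ L := by
    calc _ ≤ ((Finset.univ : Finset (Fin L)).val.map (fun l => pm l + a l)).card :=
        Multiset.card_le_card (Multiset.filter_le _ _)
      _ = L := by simp
  simp only [Multiset.card_zero]
  omega
end

section
/- Let L ≥ 2, pm : Fin L → ℝ strictly increasing, a : Fin L → ℝ nonnegative, S the multiset of 2L extended metrics. Every element of A = {s ∈ S : s < pm (L/2)} (L even) is among the L smallest elements of S. -/
/-!
Each extended metric is at least the metric `pm l` it extends, so by strict monotonicity of `pm`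
each of the two halves of `S` has at most `L / 2` elements below `pm (L / 2)`. In a sorted list
with at most `L` entries below `t`, every entry below `t` sits among the first `L`.
-/

open Finset

theorem List.mem_take_of_countP_lt_le {α : Type*} [LinearOrder α] {l : List α} {s t : α} {n : ℕ}
    (hl : l.Pairwise (· ≤ ·)) (hs : s ∈ l) (hst : s < t) (hcount : l.countP (· < t) ≤ n) :
    s ∈ l.take n := by
  by_contra hns
  rw [← List.take_append_drop n l] at hs hl hcount
  have hdrop : s ∈ l.drop n := (List.mem_append.1 hs).resolve_left hns
  have hle : ∀ x ∈ l.take n, x ≤ s := fun x hx => (List.pairwise_append.1 hl).2.2 x hx s hdrop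
  have hlen : (l.take n).length = n := by
    have := List.length_pos_of_mem hdrop
    simp only [List.length_drop, List.length_take] at this ⊢
    omega
  have htake : (l.take n).countP (· < t) = n := by
    rw [List.countP_eq_length.2 fun x hx => by simpa using (hle x hx).trans_lt hst, hlen]
  have hdrop_pos : 0 < (l.drop n).countP (· < t) := List.countP_pos_iff.2 ⟨s, hdrop, by simpa⟩
  rw [List.countP_append] at hcount
  omega

theorem Multiset.mem_take_sort_of_countP_lt_le {α : Type*} [LinearOrder α] {S : Multiset α}
    {s t : α} {n : ℕ} (hs : s ∈ S) (hst : s < t) (hcount : S.countP (· < t) ≤ n) :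
    s ∈ (S.sort (· ≤ ·)).take n := by
  refine List.mem_take_of_countP_lt_le (S.pairwise_sort _) ((S.mem_sort _).2 hs) hst ?_
  rwa [← Multiset.coe_countP, Multiset.sort_eq]

theorem StrictMono.card_filter_lt_le {α : Type*} [LinearOrder α] {n : ℕ} {f b : Fin n → α}
    (hf : StrictMono f) (hb : f ≤ b) (m : Fin n) :
    #{l | b l < f m} ≤ m := by
  calc #{l | b l < f m} ≤ #(Iio m) :=
        card_le_card fun l hl => mem_Iio.2 (hf.lt_iff_lt.1 ((hb l).trans_lt (mem_filter.1 hl).2))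
    _ = m := Fin.card_Iio m

/-- Soundness of DTS.1: every accepted candidate (extended metric below
`AT = pm (L/2)`) is among the `L` smallest elements of `S`. -/
theorem dts_accepted_among_L_smallest
    (L : ℕ) (hL : 2 ≤ L)
    (pm a : Fin L → ℝ)
    (hpm : StrictMono pm)
    (ha : ∀ l, 0 ≤ a l)
    (S : Multiset ℝ)
    (hS : S = (Finset.univ : Finset (Fin L)).val.map pm +
              (Finset.univ : Finset (Fin L)).val.map (fun l => pm l + a l)) :
    ∀ s ∈ S, s < pm ⟨L / 2, by omega⟩ →
      s ∈ (Multiset.sort S (· ≤ ·)).take L := by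
  intro s hs hlt
  refine Multiset.mem_take_sort_of_countP_lt_le hs hlt ?_
  have hpm_le : pm ≤ fun l => pm l + a l := fun l => le_add_of_nonneg_right (ha l)
  have h1 := hpm.card_filter_lt_le le_rfl ⟨L / 2, by omega⟩
  have h2 := hpm.card_filter_lt_le hpm_le ⟨L / 2, by omega⟩
  rw [hS, Multiset.countP_add, Multiset.countP_map, Multiset.countP_map]
  simp only [← Finset.filter_val, Finset.card_val] at h1 h2 ⊢
  omega
end

section
/- Let L ≥ 2, pm : Fin L → ℝ strictly increasing, a : Fin L → ℝ nonnegative, S the multiset of extended metrics. For any k < L − 1, it is possible that |{s ∈ S : s > pm k}| > L; concretely, there exist such pm and a with strictly more than L extended metrics exceeding pm k. -/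
theorem Multiset.card_lt_card_filter_add {α : Type*} (p : α → Prop) [DecidablePred p]
    {s t : Multiset α} (hs : ∃ x ∈ s, p x) (ht : ∀ x ∈ t, p x) :
    Multiset.card t < Multiset.card ((s + t).filter p) := by
  obtain ⟨x, hxs, hpx⟩ := hs
  have hpos : 0 < Multiset.card (s.filter p) :=
    Multiset.card_pos_iff_exists_mem.2 ⟨x, Multiset.mem_filter.2 ⟨hxs, hpx⟩⟩
  rw [Multiset.filter_add, Multiset.card_add, Multiset.filter_eq_self.2 ht]
  omega

-- Witness `pm l = l`, `a l = L`: all `L` shifted metrics exceed `pm k`, and so does `pm (L - 1)`.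
/-- Tightness: for any index `k < L - 1`, a rejection threshold `RT = pm k`
can prune strictly more than `L` of the `2L` extensions. -/
theorem tight_RT_overprunes
    (L : ℕ) (k : ℕ) (hk : k < L - 1) :
    ∃ pm a : Fin L → ℝ, StrictMono pm ∧ (∀ l, 0 ≤ a l) ∧
      L < ((((Finset.univ : Finset (Fin L)).val.map pm +
        (Finset.univ : Finset (Fin L)).val.map (fun l => pm l + a l))).filter
          (fun s => pm ⟨k, by omega⟩ < s)).card := by
  refine ⟨fun l => ((l : ℕ) : ℝ), fun _ => L, Nat.strictMono_cast.comp Fin.val_strictMono,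
    fun _ => L.cast_nonneg, ?_⟩
  have hcard := Multiset.card_lt_card_filter_add ((k : ℝ) < ·)
    (s := Finset.univ.val.map fun l : Fin L => ((l : ℕ) : ℝ))
    (t := Finset.univ.val.map fun l : Fin L => ((l : ℕ) : ℝ) + L) ?top ?shifted
  · rwa [Multiset.card_map, Finset.card_val, Finset.card_univ, Fintype.card_fin] at hcard
  case top =>
    exact ⟨_, Multiset.mem_map_of_mem _ (Finset.mem_univ_val (⟨L - 1, by omega⟩ : Fin L)),
      show (k : ℝ) < ((L - 1 : ℕ) : ℝ) by exact_mod_cast hk⟩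
  case shifted =>
    simp only [Multiset.mem_map, forall_exists_index, and_imp]
    rintro _ l - rfl
    have hkL : (k : ℝ) < L := by exact_mod_cast (by omega : k < L)
    linarith [(l : ℕ).cast_nonneg (α := ℝ)]
end

section
/- Let pm : Fin L → ℝ be strictly increasing and a : Fin L → ℝ nonnegative. In the multiset S of 2L extended metrics, the smallest element of S equals pm 0, and the L-th smallest element of S (rank L−1, 0-indexed) is at most pm (L−1). -/
lemma sorted_getElem_le_of_countP {ls : List ℝ} (h : ls.Pairwise (· ≤ ·))
    {i : ℕ} (hi : i < ls.length) {x : ℝ}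
    (hc : i + 1 ≤ ls.countP (fun y => decide (y ≤ x))) : ls[i] ≤ x := by
  by_contra hlt
  push_neg at hlt
  have hsplit : ls = ls.take i ++ ls.drop i := (List.take_append_drop i ls).symm
  have hcount : ls.countP (fun y => decide (y ≤ x)) =
      (ls.take i).countP (fun y => decide (y ≤ x)) +
      (ls.drop i).countP (fun y => decide (y ≤ x)) := by
    conv_lhs => rw [hsplit]
    rw [List.countP_append]
  have h1 : (ls.take i).countP (fun y => decide (y ≤ x)) ≤ i := by
    calc (ls.take i).countP (fun y => decide (y ≤ x)) ≤ (ls.take i).length :=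
          List.countP_le_length
      _ ≤ i := by simp [List.length_take]
  have h2 : (ls.drop i).countP (fun y => decide (y ≤ x)) = 0 := by
    rw [List.countP_eq_zero]
    intro y hy
    simp only [decide_eq_true_eq]
    push_neg
    obtain ⟨j, hj, hje⟩ := List.getElem_of_mem hy
    rw [List.length_drop] at hj
    rw [List.getElem_drop] at hje
    have hle : ls[i] ≤ ls[i + j] := by
      rcases Nat.eq_zero_or_pos j with hj0 | hj0
      · simp [hj0]
      · exact List.pairwise_iff_getElem.mp h i (i + j) (by omega) (by omega) (by omega)
    calc x < ls[i] := hlt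
      _ ≤ ls[i + j] := hle
      _ = y := hje
  omega

/-- The smallest extended metric equals `pm 0`, and the `L`-th smallest
extended metric (rank `L - 1`, 0-indexed) is at most `pm (L - 1)`. -/
theorem extended_metrics_order_stats
    (L : ℕ) (hL : 1 ≤ L)
    (pm a : Fin L → ℝ)
    (hpm : StrictMono pm)
    (ha : ∀ l, 0 ≤ a l)
    (S : Multiset ℝ)
    (hS : S = (Finset.univ : Finset (Fin L)).val.map pm +
              (Finset.univ : Finset (Fin L)).val.map (fun l => pm l + a l)) :
    (Multiset.sort S (· ≤ ·)).getD 0 0 = pm ⟨0, by omega⟩ ∧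
      (Multiset.sort S (· ≤ ·)).getD (L - 1) 0 ≤ pm ⟨L - 1, by omega⟩ := by
  set ls := Multiset.sort S (· ≤ ·) with hls
  have hlen : ls.length = L + L := by
    rw [hls, Multiset.length_sort, hS]
    simp
  have hsorted : ls.Pairwise (· ≤ ·) := Multiset.pairwise_sort (s := S) (r := (· ≤ ·))
  have hmemS : ∀ y ∈ S, pm ⟨0, by omega⟩ ≤ y := by
    intro y hy
    rw [hS, Multiset.mem_add] at hy
    rcases hy with hy | hy <;> rw [Multiset.mem_map] at hy <;>
      obtain ⟨l, _, rfl⟩ := hy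
    · exact hpm.monotone (by exact Fin.mk_le_of_le_val (Nat.zero_le _))
    · exact le_add_of_le_of_nonneg
        (hpm.monotone (Fin.mk_le_of_le_val (Nat.zero_le _))) (ha l)
  constructor
  · have h0 : 0 < ls.length := by omega
    rw [List.getD_eq_getElem ls 0 h0]
    have hmem : ls[0] ∈ S := by
      rw [← Multiset.mem_sort (r := (· ≤ ·))]
      exact List.getElem_mem h0
    refine le_antisymm ?_ (hmemS _ hmem)
    -- pm 0 ∈ ls, and ls[0] ≤ every element
    have hpm0 : pm ⟨0, by omega⟩ ∈ ls := by
      rw [hls, Multiset.mem_sort, hS, Multiset.mem_add]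
      left
      rw [Multiset.mem_map]
      exact ⟨⟨0, by omega⟩, Finset.mem_val.mpr (Finset.mem_univ _), rfl⟩
    obtain ⟨j, hj, hje⟩ := List.getElem_of_mem hpm0
    rw [← hje]
    rcases Nat.eq_zero_or_pos j with hj0 | hj0
    · simp [hj0]
    · exact List.pairwise_iff_getElem.mp hsorted 0 j (by omega) hj hj0
  · have hi : L - 1 < ls.length := by omega
    rw [List.getD_eq_getElem ls 0 hi]
    apply sorted_getElem_le_of_countP hsorted hi
    have hcount : (L - 1) + 1 ≤ Multiset.countP (fun y => y ≤ pm ⟨L - 1, by omega⟩) S := by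
      rw [hS, Multiset.countP_add]
      have : Multiset.countP (fun y => y ≤ pm ⟨L - 1, by omega⟩)
          ((Finset.univ : Finset (Fin L)).val.map pm) = L := by
        rw [Multiset.countP_eq_card.mpr]
        · simp
        · intro y hy
          rw [Multiset.mem_map] at hy
          obtain ⟨l, _, rfl⟩ := hy
          exact hpm.monotone (Fin.le_def.mpr (by have := l.isLt; simp; omega))
      omega
    have : ls.countP (fun y => decide (y ≤ pm ⟨L - 1, by omega⟩)) =
        Multiset.countP (fun y => y ≤ pm ⟨L - 1, by omega⟩) S := by
      conv_rhs => rw [← Multiset.sort_eq (s := S) (r := (· ≤ ·))]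
      rw [Multiset.coe_countP]
    omega
end
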